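/- arXiv:0903.0460 — 3 statements merged into one kernel-verified Lean document; each statement's English description precedes it below -/
import Mathlib

section
/- There is no satisfying assignment for the constraint X ≤_m Y (i.e., the constraint is disentailed) if and only if it is not the case that floor(X) ≤_m ceiling(Y). -/
namespace MsetPaper

/-- The maximum element of a multiset of naturals (`0` for the empty multiset). -/
def mmax (s : Multiset ℕ) : ℕ := s.sup

/-- The strict multiset order `x <ₘ y` of the paper: either `x` is empty and `y` is not,
or both are nonempty and either `max x < max y`, or the maxima agree and the multisets
with one occurrence of the maximum removed are again strictly ordered. -/
inductive MLt : Multiset ℕ → Multiset ℕ → Prop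
  | empty {y : Multiset ℕ} : y ≠ 0 → MLt 0 y
  | maxLt {x y : Multiset ℕ} : x ≠ 0 → y ≠ 0 → mmax x < mmax y → MLt x y
  | maxEq {x y : Multiset ℕ} : x ≠ 0 → y ≠ 0 → mmax x = mmax y →
      MLt (x.erase (mmax x)) (y.erase (mmax y)) → MLt x y

/-- The (non-strict) multiset order `x ≤ₘ y`. -/
def MLe (x y : Multiset ℕ) : Prop := MLt x y ∨ x = y

/-- The multiset of values taken by a vector. -/
def msetOf {n : ℕ} (x : Fin n → ℕ) : Multiset ℕ := (List.ofFn x : List ℕ)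

/-- `(x, y)` is a satisfying assignment for the constraint `X ≤ₘ Y`. -/
def SatLe {n : ℕ} (DX DY : Fin n → Finset ℕ) (x y : Fin n → ℕ) : Prop :=
  (∀ i, x i ∈ DX i) ∧ (∀ i, y i ∈ DY i) ∧ MLe (msetOf x) (msetOf y)

/-- The value `v` is consistent for the variable `X i`. -/
def ConsX {n : ℕ} (DX DY : Fin n → Finset ℕ) (i : Fin n) (v : ℕ) : Prop :=
  ∃ x y, SatLe DX DY x y ∧ x i = v

/-- The value `v` is consistent for the variable `Y i`. -/
def ConsY {n : ℕ} (DX DY : Fin n → Finset ℕ) (i : Fin n) (v : ℕ) : Prop :=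
  ∃ x y, SatLe DX DY x y ∧ y i = v

/-- The constraint `X ≤ₘ Y` is generalised arc-consistent. -/
def GACLe {n : ℕ} (DX DY : Fin n → Finset ℕ) : Prop :=
  (∀ i, ∀ v ∈ DX i, ConsX DX DY i v) ∧ (∀ i, ∀ v ∈ DY i, ConsY DX DY i v)

lemma mmax_mem (s : Multiset ℕ) (hs : s ≠ 0) : mmax s ∈ s := by
  induction s using Multiset.induction with
  | empty => exact absurd rfl hs
  | cons a t ih =>
    unfold mmax at *
    rw [Multiset.sup_cons]
    rcases eq_or_ne t 0 with rfl | ht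
    · simp
    · rcases le_total a t.sup with h | h
      · rw [sup_eq_right.mpr h]; exact Multiset.mem_cons_of_mem (ih ht)
      · rw [sup_eq_left.mpr h]; exact Multiset.mem_cons_self a t

lemma le_mmax {s : Multiset ℕ} {a : ℕ} (h : a ∈ s) : a ≤ mmax s :=
  Multiset.le_sup h

lemma not_mlt_zero {x : Multiset ℕ} (h : MLt x 0) : False := by
  cases h with
  | empty h => exact h rfl
  | maxLt _ h _ => exact h rfl
  | maxEq _ h _ _ => exact h rfl

lemma mlt_ne_zero {x y : Multiset ℕ} (h : MLt x y) : y ≠ 0 := by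
  rintro rfl; exact not_mlt_zero h

lemma mlt_trans_aux (c : ℕ) : ∀ {x y z : Multiset ℕ}, Multiset.card x = c →
    MLt x y → MLt y z → MLt x z := by
  induction c using Nat.strong_induction_on with
  | _ c ih =>
  intro x y z hc hxy hyz
  rcases eq_or_ne x 0 with rfl | hx
  · exact MLt.empty (mlt_ne_zero hyz)
  have hz := mlt_ne_zero hyz
  cases hxy with
  | empty h => exact absurd rfl hx
  | maxLt hx0 hy0 hlt =>
    cases hyz with
    | empty h => exact absurd rfl hy0
    | maxLt _ hz0 hlt2 => exact MLt.maxLt hx0 hz0 (hlt.trans hlt2)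
    | maxEq _ hz0 heq _ => exact MLt.maxLt hx0 hz0 (heq ▸ hlt)
  | maxEq hx0 hy0 heq hrec =>
    cases hyz with
    | empty h => exact absurd rfl hy0
    | maxLt _ hz0 hlt2 => exact MLt.maxLt hx0 hz0 (heq ▸ hlt2)
    | maxEq _ hz0 heq2 hrec2 =>
      refine MLt.maxEq hx0 hz0 (heq.trans heq2) ?_
      refine ih (Multiset.card (x.erase (mmax x))) ?_ rfl hrec hrec2
      rw [Multiset.card_erase_of_mem (mmax_mem x hx0), ← hc]
      exact Nat.pred_lt (Multiset.card_pos.mpr hx).ne'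

lemma mlt_trans {x y z : Multiset ℕ} (h1 : MLt x y) (h2 : MLt y z) : MLt x z :=
  mlt_trans_aux _ rfl h1 h2

lemma mle_trans {x y z : Multiset ℕ} (h1 : MLe x y) (h2 : MLe y z) : MLe x z := by
  rcases h1 with h1 | rfl
  · rcases h2 with h2 | rfl
    · exact Or.inl (mlt_trans h1 h2)
    · exact Or.inl h1
  · exact h2

lemma mle_of_rel_aux (c : ℕ) : ∀ {s t : Multiset ℕ}, Multiset.card s = c →
    Multiset.Rel (· ≤ ·) s t → MLe s t := by
  induction c using Nat.strong_induction_on with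
  | _ c ih =>
  intro s t hc hrel
  rcases eq_or_ne s 0 with rfl | hs
  · rw [Multiset.rel_zero_left] at hrel
    exact Or.inr hrel.symm
  have ht : t ≠ 0 := by
    rintro rfl; rw [Multiset.rel_zero_right] at hrel; exact hs hrel
  -- mmax s ≤ mmax t
  have hle : mmax s ≤ mmax t := by
    obtain ⟨b, t', hab, -, hteq⟩ := (Multiset.rel_cons_left.mp
      (by rwa [Multiset.cons_erase (mmax_mem s hs)] : Multiset.Rel (· ≤ ·) (mmax s ::ₘ s.erase (mmax s)) t))
    exact hab.trans (le_mmax (hteq ▸ Multiset.mem_cons_self _ _))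
  rcases lt_or_eq_of_le hle with hlt | heq
  · exact Or.inl (MLt.maxLt hs ht hlt)
  · -- maxima equal; pair up the maxima
    obtain ⟨b, t', hab, hrel', hteq⟩ := Multiset.rel_cons_left.mp
      (by rwa [Multiset.cons_erase (mmax_mem s hs)] :
        Multiset.Rel (· ≤ ·) (mmax s ::ₘ s.erase (mmax s)) t)
    have hbM : b = mmax t := le_antisymm (le_mmax (hteq ▸ Multiset.mem_cons_self _ _)) (heq ▸ hab)
    have ht' : t.erase (mmax t) = t' := by
      rw [← hbM, hteq, Multiset.erase_cons_head]
    have hcard : Multiset.card (s.erase (mmax s)) < c := by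
      rw [Multiset.card_erase_of_mem (mmax_mem s hs), ← hc]
      exact Nat.pred_lt (Multiset.card_pos.mpr hs).ne'
    have := ih _ hcard rfl hrel'
    rcases this with hlt | heqe
    · exact Or.inl (MLt.maxEq hs ht heq (ht' ▸ hlt))
    · refine Or.inr ?_
      rw [hteq, hbM, ← heq, ← heqe, Multiset.cons_erase (mmax_mem s hs)]

lemma mle_of_rel {s t : Multiset ℕ} (h : Multiset.Rel (· ≤ ·) s t) : MLe s t :=
  mle_of_rel_aux _ rfl h

lemma rel_of_forall₂ {l₁ l₂ : List ℕ} (h : List.Forall₂ (· ≤ ·) l₁ l₂) :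
    Multiset.Rel (· ≤ ·) (l₁ : Multiset ℕ) (l₂ : Multiset ℕ) := by
  induction h with
  | nil => exact Multiset.Rel.zero
  | cons ha _ ih => simpa using Multiset.Rel.cons ha ih

lemma mle_of_pointwise {n : ℕ} {x y : Fin n → ℕ} (h : ∀ i, x i ≤ y i) :
    MLe (msetOf x) (msetOf y) := by
  apply mle_of_rel
  apply rel_of_forall₂
  rw [List.forall₂_iff_get]
  refine ⟨by simp, ?_⟩
  intro i h1 h2
  simp only [List.get_eq_getElem, List.getElem_ofFn]
  exact h _

/-- The constraint `X ≤ₘ Y` is disentailed iff `¬ (floor(X) ≤ₘ ceiling(Y))`. -/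
theorem stmt1 (n : ℕ) (hn : 1 ≤ n) (DX DY : Fin n → Finset ℕ)
    (hDX : ∀ i, (DX i).Nonempty) (hDY : ∀ i, (DY i).Nonempty) :
    (¬ ∃ x y, SatLe DX DY x y) ↔
      ¬ MLe (msetOf fun i => (DX i).min' (hDX i)) (msetOf fun i => (DY i).max' (hDY i)) := by
  rw [not_iff_not]
  constructor
  · rintro ⟨x, y, hx, hy, hxy⟩
    have h1 : MLe (msetOf fun i => (DX i).min' (hDX i)) (msetOf x) :=
      mle_of_pointwise fun i => Finset.min'_le _ _ (hx i)
    have h2 : MLe (msetOf y) (msetOf fun i => (DY i).max' (hDY i)) :=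
      mle_of_pointwise fun i => Finset.le_max' _ _ (hy i)
    exact mle_trans (mle_trans h1 hxy) h2
  · intro h
    exact ⟨_, _, fun i => Finset.min'_mem _ _, fun i => Finset.max'_mem _ _, h⟩

end MsetPaper
end

section
/- If i < n satisfies max(DY i) < α, then the value min(DY i) is consistent for Y_i (hence every value of DY i is consistent). -/
namespace MsetPaper

lemma mmax_mem_s14 {A : Multiset ℕ} (hA : A ≠ 0) : mmax A ∈ A := by
  induction A using Multiset.induction with
  | empty => simp at hA
  | cons a s ih =>
    by_cases hs : s = 0
    · subst hs; simp [mmax]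
    · have h := ih hs
      rw [mmax, Multiset.sup_cons]
      rcases le_total a s.sup with h' | h'
      · rw [sup_eq_right.mpr h']; exact Multiset.mem_cons_of_mem h
      · rw [sup_eq_left.mpr h']; exact Multiset.mem_cons_self _ _

lemma key (α : ℕ) : ∀ B A : Multiset ℕ,
    (∀ b, α < b → A.count b = B.count b) → A.count α < B.count α → MLt A B := by
  intro B
  induction B using Multiset.strongInductionOn with
  | ih B ih =>
    intro A h1 h2
    have hB : B ≠ 0 := by
      intro h; subst h; simp at h2
    by_cases hA : A = 0
    · exact hA ▸ MLt.empty hB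
    · have hmemA : mmax A ∈ A := mmax_mem_s14 hA
      have hmemB : mmax B ∈ B := mmax_mem_s14 hB
      have hαB : α ∈ B := Multiset.count_pos.mp (lt_of_le_of_lt (Nat.zero_le _) h2)
      have hle : mmax A ≤ mmax B := by
        by_cases hc : α < mmax A
        · have hp : 0 < B.count (mmax A) := by
            rw [← h1 _ hc]; exact Multiset.count_pos.mpr hmemA
          exact Multiset.le_sup (Multiset.count_pos.mp hp)
        · exact le_trans (not_lt.mp hc) (Multiset.le_sup hαB)
      rcases lt_or_eq_of_le hle with h | h
      · exact MLt.maxLt hA hB h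
      · refine MLt.maxEq hA hB h
          (ih (B.erase (mmax B)) ((Multiset.erase_lt).mpr hmemB) (A.erase (mmax A)) ?_ ?_)
        · intro b hb
          by_cases hbm : b = mmax B
          · subst hbm
            have eA : (A.erase (mmax A)).count (mmax B) = A.count (mmax B) - 1 := by
              rw [← h]; exact Multiset.count_erase_self _ _
            rw [eA, Multiset.count_erase_self, h1 _ hb]
          · have hbm' : b ≠ mmax A := by rw [h]; exact hbm
            rw [Multiset.count_erase_of_ne hbm, Multiset.count_erase_of_ne hbm', h1 _ hb]
        · by_cases hbm : α = mmax B
          · have hA1 : 0 < A.count α := by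
              rw [hbm, ← h]; exact Multiset.count_pos.mpr hmemA
            have eA : (A.erase (mmax A)).count α = A.count α - 1 := by
              rw [hbm, ← h]; exact Multiset.count_erase_self _ _
            have eB : (B.erase (mmax B)).count α = B.count α - 1 := by
              rw [hbm]; exact Multiset.count_erase_self _ _
            omega
          · have hbm' : α ≠ mmax A := by rw [h]; exact hbm
            rw [Multiset.count_erase_of_ne hbm, Multiset.count_erase_of_ne hbm']
            exact h2

lemma count_msetOf {n : ℕ} (f : Fin n → ℕ) (b : ℕ) :
    (msetOf f).count b = (Finset.univ.filter fun j => f j = b).card := by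
  have h : msetOf f = (Finset.univ.val).map f := by
    rw [msetOf, List.ofFn_eq_map]; rfl
  rw [h, Multiset.count_map]
  simp only [eq_comm]
  rfl

/-- `cx DX hDX v` counts the indices `i` with `min (DX i) = v`
(the occurrence vector of `floor(X)`). -/
def cx {n : ℕ} (DX : Fin n → Finset ℕ) (hDX : ∀ i, (DX i).Nonempty) (v : ℕ) : ℕ :=
  (Finset.univ.filter fun i => (DX i).min' (hDX i) = v).card

/-- `cy DY hDY v` counts the indices `i` with `max (DY i) = v`
(the occurrence vector of `ceiling(Y)`). -/
def cy {n : ℕ} (DY : Fin n → Finset ℕ) (hDY : ∀ i, (DY i).Nonempty) (v : ℕ) : ℕ :=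
  (Finset.univ.filter fun i => (DY i).max' (hDY i) = v).card

/-- If `max(DY i) < α` then `min(DY i)` is consistent (hence every value of `DY i` is). -/
theorem stmt14 (n : ℕ) (hn : 1 ≤ n) (DX DY : Fin n → Finset ℕ)
    (hDX : ∀ i, (DX i).Nonempty) (hDY : ∀ i, (DY i).Nonempty)
    (α : ℕ)
    (hα1 : cx DX hDX α < cy DY hDY α)
    (hα2 : ∀ b : ℕ, α < b → cx DX hDX b = cy DY hDY b)
    (i : Fin n) (hi : (DY i).max' (hDY i) < α) :
    ConsY DX DY i ((DY i).min' (hDY i)) ∧ ∀ v ∈ DY i, ConsY DX DY i v := by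
  have main : ∀ v ∈ DY i, ConsY DX DY i v := by
    intro v hv
    have hvle : v ≤ (DY i).max' (hDY i) := Finset.le_max' _ _ hv
    refine ⟨fun j => (DX j).min' (hDX j),
      fun j => if j = i then v else (DY j).max' (hDY j),
      ⟨fun j => Finset.min'_mem _ _, fun j => ?_, ?_⟩, by simp⟩
    · by_cases h : j = i
      · subst h; simpa using hv
      · simpa [h] using Finset.max'_mem _ (hDY j)
    · left
      have e1 : ∀ b, (msetOf fun j => (DX j).min' (hDX j)).count b = cx DX hDX b :=
        fun b => count_msetOf _ _
      have e2 : ∀ b, α ≤ b →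
          (msetOf fun j => if j = i then v else (DY j).max' (hDY j)).count b
            = cy DY hDY b := by
        intro b hb
        rw [count_msetOf, cy]
        congr 1
        apply Finset.filter_congr
        intro j _
        by_cases h : j = i
        · subst h
          rw [if_pos rfl]
          constructor <;> intro h' <;> omega
        · simp [h]
      apply key α
      · intro b hb
        rw [e1, e2 b (le_of_lt hb)]
        exact hα2 b hb
      · rw [e1, e2 α le_rfl]
        exact hα1
  exact ⟨main _ (Finset.min'_mem _ _), main⟩


end MsetPaper
end

section
/- (a) For every family of nonempty finite domains D k j (k < n, j < m), if the strict constraint X_i <_m X_j is GAC for all i < j < n, then the strict constraint X_i <_m X_{i+1} is GAC for all i < n − 1. (b) Moreover this is strict: there exist n, m and a family of nonempty finite domains D k j such that X_i <_m X_{i+1} is GAC for all i < n − 1, yet X_i <_m X_j is not GAC for some i < j < n. -/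
namespace MsetPaper

/-- `(x, y)` is a satisfying assignment for the strict `X_k <ₘ X_l`. -/
def SatPairLt {m : ℕ} (Dk Dl : Fin m → Finset ℕ) (x y : Fin m → ℕ) : Prop :=
  (∀ j, x j ∈ Dk j) ∧ (∀ j, y j ∈ Dl j) ∧ MLt (msetOf x) (msetOf y)

/-- The pairwise strict constraint `X_k <ₘ X_l` is generalised arc-consistent. -/
def GACPairLt {m : ℕ} (Dk Dl : Fin m → Finset ℕ) : Prop :=
  (∀ j, ∀ v ∈ Dk j, ∃ x y, SatPairLt Dk Dl x y ∧ x j = v) ∧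
  (∀ j, ∀ v ∈ Dl j, ∃ x y, SatPairLt Dk Dl x y ∧ y j = v)

lemma mlt_inv {x y : Multiset ℕ} (h : MLt x y) :
    (x = 0 ∧ y ≠ 0) ∨ (x ≠ 0 ∧ y ≠ 0 ∧ mmax x < mmax y) ∨
      (x ≠ 0 ∧ y ≠ 0 ∧ mmax x = mmax y ∧ MLt (x.erase (mmax x)) (y.erase (mmax y))) := by
  cases h with
  | empty h => exact Or.inl ⟨rfl, h⟩
  | maxLt h1 h2 h3 => exact Or.inr (Or.inl ⟨h1, h2, h3⟩)
  | maxEq h1 h2 h3 h4 => exact Or.inr (Or.inr ⟨h1, h2, h3, h4⟩)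

lemma msetOf_two (x : Fin 2 → ℕ) : msetOf x = {x 0, x 1} := rfl

lemma mmax_pair {a b : ℕ} (h : b ≤ a) : mmax {a, b} = a := by
  simp [mmax, Multiset.sup_cons, Multiset.sup_singleton]
  omega

lemma mmax_single (a : ℕ) : mmax {a} = a := by
  simp [mmax]

lemma mlt2 {a b c d : ℕ} (hba : b ≤ a) (hdc : d ≤ c)
    (h : a < c ∨ (a = c ∧ b < d)) : MLt {a, b} {c, d} := by
  rcases h with h | ⟨rfl, h⟩
  · exact MLt.maxLt (by simp) (by simp) (by rw [mmax_pair hba, mmax_pair hdc]; exact h)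
  · refine MLt.maxEq (by simp) (by simp) (by rw [mmax_pair hba, mmax_pair hdc]) ?_
    rw [mmax_pair hba, mmax_pair hdc]
    show MLt (Multiset.erase (a ::ₘ {b}) a) (Multiset.erase (a ::ₘ {d}) a)
    rw [Multiset.erase_cons_head, Multiset.erase_cons_head]
    exact MLt.maxLt (by simp) (by simp) (by rw [mmax_single, mmax_single]; exact h)

lemma mlt2' {a b c d : ℕ} (hba : b ≤ a) (hdc : d ≤ c)
    (h : MLt {a, b} {c, d}) : a < c ∨ (a = c ∧ b < d) := by
  rcases mlt_inv h with ⟨h1, _⟩ | ⟨_, _, h3⟩ | ⟨_, _, h3, h4⟩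
  · simp at h1
  · rw [mmax_pair hba, mmax_pair hdc] at h3; exact Or.inl h3
  · rw [mmax_pair hba, mmax_pair hdc] at h3 h4
    subst h3
    refine Or.inr ⟨rfl, ?_⟩
    rw [show ({a,b} : Multiset ℕ).erase a = {b} from Multiset.erase_cons_head ..,
        show ({a,d} : Multiset ℕ).erase a = {d} from Multiset.erase_cons_head ..] at h4
    rcases mlt_inv h4 with ⟨h1, _⟩ | ⟨_, _, h3⟩ | ⟨_, _, h3, h5⟩
    · simp at h1
    · rw [mmax_single, mmax_single] at h3; exact h3
    · rw [mmax_single, mmax_single] at h5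
      simp only [Multiset.erase_singleton] at h5
      rcases mlt_inv h5 with ⟨_, h⟩ | ⟨h, _⟩ | ⟨h, _⟩ <;> simp_all

/-- Convenient form for concrete vectors. -/
lemma mltOf {x y : Fin 2 → ℕ} (a b c d : ℕ) (hx : msetOf x = {a, b}) (hy : msetOf y = {c, d})
    (hba : b ≤ a) (hdc : d ≤ c) (h : a < c ∨ (a = c ∧ b < d)) : MLt (msetOf x) (msetOf y) := by
  rw [hx, hy]; exact mlt2 hba hdc h

lemma gac01 : GACPairLt ![({0} : Finset ℕ), {1}] ![({0, 2} : Finset ℕ), {0, 2}] := by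
  constructor
  · intro j v hv
    fin_cases j <;> fin_cases hv
    · exact ⟨![0, 1], ![2, 0], ⟨by decide, by decide,
        mltOf 1 0 2 0 (by decide) (by decide) (by norm_num) (by norm_num) (by omega)⟩, by decide⟩
    · exact ⟨![0, 1], ![2, 0], ⟨by decide, by decide,
        mltOf 1 0 2 0 (by decide) (by decide) (by norm_num) (by norm_num) (by omega)⟩, by decide⟩
  · intro j v hv
    fin_cases j <;> fin_cases hv
    · exact ⟨![0, 1], ![0, 2], ⟨by decide, by decide,
        mltOf 1 0 2 0 (by decide) (by decide) (by norm_num) (by norm_num) (by omega)⟩, by decide⟩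
    · exact ⟨![0, 1], ![2, 0], ⟨by decide, by decide,
        mltOf 1 0 2 0 (by decide) (by decide) (by norm_num) (by norm_num) (by omega)⟩, by decide⟩
    · exact ⟨![0, 1], ![2, 0], ⟨by decide, by decide,
        mltOf 1 0 2 0 (by decide) (by decide) (by norm_num) (by norm_num) (by omega)⟩, by decide⟩
    · exact ⟨![0, 1], ![0, 2], ⟨by decide, by decide,
        mltOf 1 0 2 0 (by decide) (by decide) (by norm_num) (by norm_num) (by omega)⟩, by decide⟩

lemma gac12 : GACPairLt ![({0, 2} : Finset ℕ), {0, 2}] ![({1} : Finset ℕ), {0, 2}] := by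
  constructor
  · intro j v hv
    fin_cases j <;> fin_cases hv
    · exact ⟨![0, 0], ![1, 0], ⟨by decide, by decide,
        mltOf 0 0 1 0 (by decide) (by decide) (by norm_num) (by norm_num) (by omega)⟩, by decide⟩
    · exact ⟨![2, 0], ![1, 2], ⟨by decide, by decide,
        mltOf 2 0 2 1 (by decide) (by decide) (by norm_num) (by norm_num) (by omega)⟩, by decide⟩
    · exact ⟨![0, 0], ![1, 0], ⟨by decide, by decide,
        mltOf 0 0 1 0 (by decide) (by decide) (by norm_num) (by norm_num) (by omega)⟩, by decide⟩
    · exact ⟨![0, 2], ![1, 2], ⟨by decide, by decide,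
        mltOf 2 0 2 1 (by decide) (by decide) (by norm_num) (by norm_num) (by omega)⟩, by decide⟩
  · intro j v hv
    fin_cases j <;> fin_cases hv
    · exact ⟨![0, 0], ![1, 0], ⟨by decide, by decide,
        mltOf 0 0 1 0 (by decide) (by decide) (by norm_num) (by norm_num) (by omega)⟩, by decide⟩
    · exact ⟨![0, 0], ![1, 0], ⟨by decide, by decide,
        mltOf 0 0 1 0 (by decide) (by decide) (by norm_num) (by norm_num) (by omega)⟩, by decide⟩
    · exact ⟨![0, 0], ![1, 2], ⟨by decide, by decide,
        mltOf 0 0 2 1 (by decide) (by decide) (by norm_num) (by norm_num) (by omega)⟩, by decide⟩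

lemma ngac02 : ¬ GACPairLt ![({0} : Finset ℕ), {1}] ![({1} : Finset ℕ), {0, 2}] := by
  rintro ⟨-, h2⟩
  obtain ⟨x, y, ⟨hx, hy, hlt⟩, hy1⟩ := h2 1 0 (by decide)
  have hx0 : x 0 = 0 := by simpa using hx 0
  have hx1 : x 1 = 1 := by simpa using hx 1
  have hy0 : y 0 = 1 := by simpa using hy 0
  rw [msetOf_two x, msetOf_two y, hx0, hx1, hy0, hy1] at hlt
  rw [show ({0, 1} : Multiset ℕ) = {1, 0} by decide] at hlt
  have := mlt2' (a := 1) (b := 0) (c := 1) (d := 0) (by norm_num) (by norm_num) hlt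
  omega

/-- GAC of all pairwise strict constraints implies GAC of the adjacent ones; strictly so. -/
theorem stmt18 :
    (∀ (n m : ℕ), 2 ≤ n → 1 ≤ m → ∀ D : Fin n → Fin m → Finset ℕ,
        (∀ k j, (D k j).Nonempty) →
        (∀ i j : Fin n, i < j → GACPairLt (D i) (D j)) →
        ∀ (i : ℕ) (h : i + 1 < n),
          GACPairLt (D ⟨i, Nat.lt_of_succ_lt h⟩) (D ⟨i + 1, h⟩)) ∧
    (∃ (n m : ℕ) (_ : 2 ≤ n) (_ : 1 ≤ m) (D : Fin n → Fin m → Finset ℕ),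
        (∀ k j, (D k j).Nonempty) ∧
        (∀ (i : ℕ) (h : i + 1 < n),
          GACPairLt (D ⟨i, Nat.lt_of_succ_lt h⟩) (D ⟨i + 1, h⟩)) ∧
        ∃ i j : Fin n, i < j ∧ ¬ GACPairLt (D i) (D j)) := by
  constructor
  · intro n m _ _ D _ hgac i h
    exact hgac ⟨i, Nat.lt_of_succ_lt h⟩ ⟨i + 1, h⟩ (by simp [Fin.lt_def])
  · refine ⟨3, 2, by norm_num, by norm_num,
      ![![{0}, {1}], ![{0, 2}, {0, 2}], ![{1}, {0, 2}]], by decide, ?_, 0, 2, by decide, ngac02⟩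
    intro i h
    have hi : i = 0 ∨ i = 1 := by omega
    rcases hi with rfl | rfl
    · exact gac01
    · exact gac12

end MsetPaper
end
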